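/- In a bounded distributive lattice A, the set S of join-subfit elements of A is an ideal: it is a downset and is closed under binary joins (if a, b ∈ S then a ∨ b ∈ S), and 0 ∈ S. -/
import Mathlib


/-- An element `a` is a *join-subfit element* if the principal downset `↓a`
(a bounded lattice with top `a`) is join-subfit. -/
def IsJoinSubfitElt {A : Type*} [Lattice A] [OrderBot A] (a : A) : Prop :=
  ∀ s t : A, s ≤ a → t ≤ a → ¬ t ≤ s → ∃ y, y ≤ a ∧ t ⊔ y = a ∧ s ⊔ y ≠ a

lemma jsubfit_down {A : Type*} [DistribLattice A] [BoundedOrder A]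
    (a b : A) (ha : IsJoinSubfitElt a) (hba : b ≤ a) : IsJoinSubfitElt b := by
  intro s t hs ht hts
  obtain ⟨y, hy, hty, hsy⟩ := ha s t (hs.trans hba) (ht.trans hba) hts
  refine ⟨y ⊓ b, inf_le_right, ?_, ?_⟩
  · rw [sup_inf_left, hty, sup_eq_right.mpr ht, inf_eq_right.mpr hba]
  · intro hcon
    apply hsy
    have h1 : t ≤ s ⊔ y := by
      calc t ≤ b := ht
        _ = s ⊔ (y ⊓ b) := hcon.symm
        _ ≤ s ⊔ y := sup_le_sup_left inf_le_left _
    have : a ≤ s ⊔ y := by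
      rw [← hty]; exact sup_le (h1) le_sup_right
    exact le_antisymm (sup_le ((hs.trans hba)) hy) this

lemma jsubfit_key {A : Type*} [DistribLattice A] [BoundedOrder A]
    (a b : A) (ha : IsJoinSubfitElt a) (hb : IsJoinSubfitElt b)
    (s t : A) (hs : s ≤ a ⊔ b) (ht : t ≤ a ⊔ b) (h : ¬ t ⊓ a ≤ s) :
    ∃ y, y ≤ a ⊔ b ∧ t ⊔ y = a ⊔ b ∧ s ⊔ y ≠ a ⊔ b := by
  have h1 : ¬ t ⊓ a ≤ s ⊓ a := fun hh => h (hh.trans inf_le_left)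
  obtain ⟨y, hy, hty, hsy⟩ := ha (s ⊓ a) (t ⊓ a) inf_le_right inf_le_right h1
  by_cases hc : (s ⊓ a) ⊔ y ⊔ (a ⊓ b) = a
  · -- need a second application, in ↓b
    have h2 : ¬ a ⊓ b ≤ (s ⊔ y) ⊓ b := by
      intro hh
      apply hsy
      have hab : a ⊓ b ≤ (s ⊓ a) ⊔ y := by
        have h3 : a ⊓ b ≤ a ⊓ (s ⊔ y) := le_inf inf_le_left (hh.trans inf_le_left)
        rwa [inf_sup_left, inf_comm a s, inf_eq_right.mpr hy] at h3
      calc (s ⊓ a) ⊔ y = (s ⊓ a) ⊔ y ⊔ (a ⊓ b) := (sup_eq_left.mpr hab).symm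
        _ = a := hc
    obtain ⟨w, hw, hbw, hsw⟩ := hb ((s ⊔ y) ⊓ b) (a ⊓ b) inf_le_right inf_le_right h2
    refine ⟨y ⊔ w, sup_le (hy.trans le_sup_left) (hw.trans le_sup_right), ?_, ?_⟩
    · apply le_antisymm
      · exact sup_le ht (sup_le (hy.trans le_sup_left) (hw.trans le_sup_right))
      · have haw : a ⊔ b ≤ a ⊔ w := by
          apply sup_le le_sup_left
          calc b = a ⊓ b ⊔ w := hbw.symm
            _ ≤ a ⊔ w := sup_le_sup_right inf_le_left w
        have hale : a ≤ t ⊔ y := by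
          rw [← hty]; exact sup_le (inf_le_left.trans le_sup_left) le_sup_right
        refine haw.trans ?_
        rw [← sup_assoc]
        exact sup_le_sup_right hale w
    · intro hcon
      apply hsw
      have hble : b ≤ s ⊔ y ⊔ w := by rw [sup_assoc, hcon]; exact le_sup_right
      apply le_antisymm
      · exact sup_le inf_le_right hw
      · calc b = b ⊓ (s ⊔ y ⊔ w) := (inf_eq_left.mpr hble).symm
          _ = (b ⊓ (s ⊔ y)) ⊔ (b ⊓ w) := inf_sup_left b _ _
          _ ≤ ((s ⊔ y) ⊓ b) ⊔ w := sup_le_sup (inf_comm b _).le inf_le_right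
  · refine ⟨y ⊔ b, sup_le (hy.trans le_sup_left) le_sup_right, ?_, ?_⟩
    · apply le_antisymm
      · exact sup_le ht (sup_le (hy.trans le_sup_left) le_sup_right)
      · have hale : a ≤ t ⊔ y := by
          rw [← hty]; exact sup_le (inf_le_left.trans le_sup_left) le_sup_right
        rw [← sup_assoc]
        exact sup_le_sup_right hale b
    · intro hcon
      apply hc
      have hale : a ≤ s ⊔ y ⊔ b := by rw [sup_assoc, hcon]; exact le_sup_left
      have : a = (s ⊓ a) ⊔ y ⊔ (a ⊓ b) := by
        calc a = a ⊓ (s ⊔ y ⊔ b) := (inf_eq_left.mpr hale).symm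
          _ = (a ⊓ (s ⊔ y)) ⊔ (a ⊓ b) := inf_sup_left a _ _
          _ = ((a ⊓ s) ⊔ (a ⊓ y)) ⊔ (a ⊓ b) := by rw [inf_sup_left]
          _ = (s ⊓ a) ⊔ y ⊔ (a ⊓ b) := by rw [inf_comm a s, inf_eq_right.mpr hy]
      exact this.symm

theorem jsubfit_elts_ideal {A : Type*} [DistribLattice A] [BoundedOrder A] :
    (∀ a b : A, IsJoinSubfitElt a → b ≤ a → IsJoinSubfitElt b) ∧
    (∀ a b : A, IsJoinSubfitElt a → IsJoinSubfitElt b → IsJoinSubfitElt (a ⊔ b)) ∧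
    IsJoinSubfitElt (⊥ : A) := by
  refine ⟨jsubfit_down, ?_, ?_⟩
  · intro a b ha hb s t hs ht hts
    have hsplit : ¬ t ⊓ a ≤ s ∨ ¬ t ⊓ b ≤ s := by
      by_contra hh
      push_neg at hh
      apply hts
      have : t = (t ⊓ a) ⊔ (t ⊓ b) := by
        rw [← inf_sup_left, inf_eq_left.mpr ht]
      rw [this]
      exact sup_le hh.1 hh.2
    rcases hsplit with h | h
    · exact jsubfit_key a b ha hb s t hs ht h
    · have := jsubfit_key b a hb ha s t (by rwa [sup_comm]) (by rwa [sup_comm]) h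
      rw [sup_comm b a] at this
      exact this
  · intro s t _ ht hts
    exact absurd (ht.trans bot_le) hts
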